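/- Truncated second-moment series bound (Lemma 3(a)): Let X be a random variable in a sub-linear expectation space (Ω, ℋ, E), let V be the capacity generated by E, and suppose C_V[|X|] < ∞. Then Σ_{j=1}^∞ E[(|X| ∧ j)²]/j² ≤ 2 + 3·C_V[|X|] < ∞, where |X| ∧ j := min(|X|, j). -/

import Mathlib

open scoped BigOperators ENNReal
open Filter

/-- The class `C_{l,Lip}(ℝ^n)` of local-Lipschitz test functions:
`|φ(x) − φ(y)| ≤ C (1 + |x|^m + |y|^m) |x − y|` for some `C > 0` and `m ∈ ℕ`. -/
def CLLip {n : ℕ} (φ : (Fin n → ℝ) → ℝ) : Prop :=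
  ∃ C > (0:ℝ), ∃ m : ℕ, ∀ x y : Fin n → ℝ,
    |φ x - φ y| ≤ C * (1 + ‖x‖ ^ m + ‖y‖ ^ m) * ‖x - y‖

/-- A sub-linear expectation space `(Ω, ℋ, E)`: `ℋ` is a set of real random variables
containing the constants and stable under composition with `C_{l,Lip}` functions, and
`E : ℋ → [-∞, ∞]` is monotone, constant preserving, sub-additive (whenever the right-hand
side is not of the form `∞ - ∞`) and positively homogeneous. -/
structure SLE (Ω : Type*) where
  H : Set (Ω → ℝ)
  E : (Ω → ℝ) → EReal
  const_mem : ∀ c : ℝ, (fun _ => c) ∈ H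
  comp_mem : ∀ {n : ℕ} (X : Fin n → Ω → ℝ) (φ : (Fin n → ℝ) → ℝ),
      (∀ i, X i ∈ H) → CLLip φ → (fun ω => φ (fun i => X i ω)) ∈ H
  mono : ∀ {X Y : Ω → ℝ}, X ∈ H → Y ∈ H → (∀ ω, X ω ≤ Y ω) → E X ≤ E Y
  const_eq : ∀ c : ℝ, E (fun _ => c) = (c : EReal)
  subadd : ∀ {X Y : Ω → ℝ}, X ∈ H → Y ∈ H →
      ¬(E X = ⊤ ∧ E Y = ⊥) → ¬(E X = ⊥ ∧ E Y = ⊤) →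
      E (fun ω => X ω + Y ω) ≤ E X + E Y
  homog : ∀ {X : Ω → ℝ}, X ∈ H → ∀ l : ℝ, 0 ≤ l →
      E (fun ω => l * X ω) = (l : EReal) * E X

/-- The canonical map from `[-∞,∞]` to `[0,∞]` (faithful on nonnegative values). -/
noncomputable def erealToENNReal (x : EReal) : ℝ≥0∞ :=
  if x = ⊤ then ⊤ else ENNReal.ofReal x.toReal

namespace SLE

variable {Ω : Type*}

/-- The conjugate (lower) expectation `ℰ[X] := -E[-X]`. -/
noncomputable def cE (S : SLE Ω) (X : Ω → ℝ) : EReal := - S.E (fun ω => - X ω)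

/-- `Y` (an `n`-dimensional random vector) is independent to `X` (an `m`-dimensional
random vector) under the sub-linear expectation `E`:
`E[φ(X,Y)] = E[ E[φ(x,Y)]|_{x=X} ]` for every `φ ∈ C_{l,Lip}(ℝ^m × ℝ^n)` such that
`φ̄(x) := E[|φ(x,Y)|] < ∞` for every `x` and `E[|φ̄(X)|] < ∞`. -/
def IndepTo (S : SLE Ω) {m n : ℕ} (X : Fin m → Ω → ℝ) (Y : Fin n → Ω → ℝ) : Prop :=
  ∀ φ : (Fin (m + n) → ℝ) → ℝ, CLLip φ →
    (∀ x : Fin m → ℝ, S.E (fun ω' => |φ (Fin.append x (fun i => Y i ω'))|) ≠ ⊤) →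
    S.E (fun ω =>
      |(S.E (fun ω' => |φ (Fin.append (fun i => X i ω) (fun i => Y i ω'))|)).toReal|) ≠ ⊤ →
    S.E (fun ω => φ (Fin.append (fun i => X i ω) (fun i => Y i ω))) =
      S.E (fun ω => (S.E (fun ω' => φ (Fin.append (fun i => X i ω) (fun i => Y i ω')))).toReal)

/-- `Y` (an `n`-dimensional random vector) is negatively dependent to `X`
(an `m`-dimensional random vector) under the sub-linear expectation `E`:
`E[φ₁(X) φ₂(Y)] ≤ E[φ₁(X)] E[φ₂(Y)]` for every pair of test functions
`φ₁ ∈ C_{l,Lip}(ℝ^m)`, `φ₂ ∈ C_{l,Lip}(ℝ^n)` which are both coordinatewise nondecreasing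
or both coordinatewise nonincreasing, with `φ₁(X) ≥ 0`, `E[φ₂(Y)] ≥ 0` and
`E[|φ₁(X) φ₂(Y)|], E[|φ₁(X)|], E[|φ₂(Y)|] < ∞`. -/
def NegDepTo (S : SLE Ω) {m n : ℕ} (X : Fin m → Ω → ℝ) (Y : Fin n → Ω → ℝ) : Prop :=
  ∀ (φ₁ : (Fin m → ℝ) → ℝ) (φ₂ : (Fin n → ℝ) → ℝ), CLLip φ₁ → CLLip φ₂ →
    ((Monotone φ₁ ∧ Monotone φ₂) ∨ (Antitone φ₁ ∧ Antitone φ₂)) →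
    (∀ ω, 0 ≤ φ₁ (fun i => X i ω)) →
    0 ≤ S.E (fun ω => φ₂ (fun i => Y i ω)) →
    S.E (fun ω => |φ₁ (fun i => X i ω) * φ₂ (fun i => Y i ω)|) ≠ ⊤ →
    S.E (fun ω => |φ₁ (fun i => X i ω)|) ≠ ⊤ →
    S.E (fun ω => |φ₂ (fun i => Y i ω)|) ≠ ⊤ →
    S.E (fun ω => φ₁ (fun i => X i ω) * φ₂ (fun i => Y i ω)) ≤
      S.E (fun ω => φ₁ (fun i => X i ω)) * S.E (fun ω => φ₂ (fun i => Y i ω))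

/-- The capacity generated by a sub-linear expectation:
`V(A) := inf{E[ξ] : I_A ≤ ξ, ξ ∈ ℋ}`. -/
noncomputable def V (S : SLE Ω) (A : Set Ω) : EReal :=
  sInf (S.E '' {ξ | ξ ∈ S.H ∧ ∀ ω, A.indicator (fun _ => (1:ℝ)) ω ≤ ξ ω})

/-- The outer capacity `V*(A) := inf{Σ_n V(A_n) : A ⊆ ⋃_n A_n}`. -/
noncomputable def Vstar (S : SLE Ω) (A : Set Ω) : EReal :=
  sInf {x : EReal | ∃ B : ℕ → Set Ω, A ⊆ ⋃ i, B i ∧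
    x = ((∑' i, erealToENNReal (S.V (B i)) : ℝ≥0∞) : EReal)}

/-- The Choquet integral
`C_V[X] := ∫_0^∞ V(X ≥ t) dt + ∫_{-∞}^0 (V(X ≥ t) − 1) dt`. -/
noncomputable def choquet (S : SLE Ω) (X : Ω → ℝ) : EReal :=
  ((∫⁻ t in Set.Ioi (0:ℝ), erealToENNReal (S.V {ω | t ≤ X ω}) : ℝ≥0∞) : EReal)
    - ((∫⁻ t in Set.Iio (0:ℝ), erealToENNReal (1 - S.V {ω | t ≤ X ω}) : ℝ≥0∞) : EReal)

/-- A sequence `{X_n ; n ≥ 1}` is identically distributed: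
`E[φ(X_i)] = E[φ(X_1)]` for all `i ≥ 1` and `φ ∈ C_{l,Lip}(ℝ)`. -/
def IdentDistrib (S : SLE Ω) (X : ℕ → Ω → ℝ) : Prop :=
  ∀ i : ℕ, 1 ≤ i → ∀ φ : (Fin 1 → ℝ) → ℝ, CLLip φ →
    S.E (fun ω => φ (fun _ => X i ω)) = S.E (fun ω => φ (fun _ => X 1 ω))

/-- A sequence `{X_n ; n ≥ 1}` is negatively dependent:
`X_{i+1}` is negatively dependent to `(X_1, …, X_i)` for every `i ≥ 1`. -/
def NegDepSeq (S : SLE Ω) (X : ℕ → Ω → ℝ) : Prop :=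
  ∀ i : ℕ, 1 ≤ i →
    S.NegDepTo (fun j : Fin i => X ((j : ℕ) + 1)) (fun _ : Fin 1 => X (i + 1))

/-- A sequence `{X_n ; n ≥ 1}` is independent:
`X_{i+1}` is independent to `(X_1, …, X_i)` for every `i ≥ 1`. -/
def IndepSeq (S : SLE Ω) (X : ℕ → Ω → ℝ) : Prop :=
  ∀ i : ℕ, 1 ≤ i →
    S.IndepTo (fun j : Fin i => X ((j : ℕ) + 1)) (fun _ : Fin 1 => X (i + 1))

end SLE

/-!
Pointwise `(|X| ∧ j)² ≤ ∑_{k<j} (2k+1) 1{|X| ≥ k}`, and sub-additivity together with the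
definition of `V` as an infimum turns this into `E[(|X| ∧ j)²] ≤ ∑_{k<j} (2k+1) V(|X| ≥ k)`.
After exchanging the order of summation, `V(|X| ≥ k)` carries the weight
`(2k+1) ∑_{j>k} j⁻² ≤ 2`, by telescoping `j⁻² ≤ 2/(2j-1) - 2/(2j+1)`. Hence the series is at
most `2 ∑_{k≥0} V(|X| ≥ k) ≤ 2 + 2 C_V[|X|]`, as `V(|X| ≥ k) ≤ ∫_{k-1}^k V(|X| ≥ t) dt`.
-/

open Set MeasureTheory
open scoped NNReal

theorem erealToENNReal_coe (r : ℝ) : erealToENNReal r = ENNReal.ofReal r := by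
  simp [erealToENNReal]

theorem erealToENNReal_coe_ennreal (a : ℝ≥0∞) : erealToENNReal a = a := by
  cases a with
  | top => simp [erealToENNReal]
  | coe r => simp [erealToENNReal]

theorem erealToENNReal_one : erealToENNReal 1 = 1 := by
  simpa using erealToENNReal_coe 1

theorem erealToENNReal_mono : Monotone erealToENNReal := by
  intro x y h
  unfold erealToENNReal
  split_ifs with hx hy hy
  · exact le_rfl
  · exact absurd (top_le_iff.mp (hx ▸ h)) hy
  · exact le_top
  · rcases eq_or_ne x ⊥ with rfl | hxb
    · simp
    · exact ENNReal.ofReal_le_ofReal (EReal.toReal_le_toReal h hxb hy)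

theorem erealToENNReal_add {x y : EReal} (hx : 0 ≤ x) (hy : 0 ≤ y) :
    erealToENNReal (x + y) = erealToENNReal x + erealToENNReal y := by
  induction x using EReal.rec with
  | bot => simp at hx
  | top => simp [EReal.top_add_of_ne_bot (ne_bot_of_le_ne_bot (by simp) hy), erealToENNReal]
  | coe a =>
    induction y using EReal.rec with
    | bot => simp at hy
    | top => simp [erealToENNReal]
    | coe b =>
      rw [← EReal.coe_add, erealToENNReal_coe, erealToENNReal_coe, erealToENNReal_coe,
        ENNReal.ofReal_add (by exact_mod_cast hx) (by exact_mod_cast hy)]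

theorem erealToENNReal_coe_mul {c : ℝ} (hc : 0 ≤ c) {x : EReal} (hx : 0 ≤ x) :
    erealToENNReal (c * x) = ENNReal.ofReal c * erealToENNReal x := by
  induction x using EReal.rec with
  | bot => simp at hx
  | top =>
    rcases hc.eq_or_lt with rfl | hc
    · simp [erealToENNReal]
    · simp [EReal.mul_top_of_pos (EReal.coe_pos.mpr hc), erealToENNReal, hc]
  | coe a => rw [← EReal.coe_mul, erealToENNReal_coe, erealToENNReal_coe, ENNReal.ofReal_mul hc]

theorem CLLip.of_lipschitzWith {n : ℕ} {K : ℝ≥0} {φ : (Fin n → ℝ) → ℝ}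
    (hφ : LipschitzWith K φ) : CLLip φ := by
  refine ⟨K + 1, by positivity, 0, fun x y => ?_⟩
  have h := hφ.dist_le_mul x y
  rw [Real.dist_eq, dist_eq_norm] at h
  simp only [pow_zero]
  nlinarith [norm_nonneg (x - y)]

theorem lipschitzWith_sq_min_abs (c : ℝ≥0) :
    LipschitzWith (2 * c) fun t : ℝ => min |t| c ^ 2 := by
  refine LipschitzWith.of_dist_le_mul fun x y => ?_
  have hx : 0 ≤ min |x| c := le_min (abs_nonneg x) c.2
  have hy : 0 ≤ min |y| c := le_min (abs_nonneg y) c.2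
  have hxy : |min |x| c - min |y| c| ≤ |x - y| :=
    (abs_min_sub_min_le_max _ _ _ _).trans (by simpa using abs_abs_sub_abs_le_abs_sub x y)
  rw [Real.dist_eq, Real.dist_eq, sq_sub_sq, abs_mul, abs_of_nonneg (add_nonneg hx hy)]
  push_cast
  gcongr
  linarith [min_le_right |x| c, min_le_right |y| c]

theorem sq_min_le_sum_range_odd {x : ℝ} (hx : 0 ≤ x) (n : ℕ) :
    min x n ^ 2 ≤ ∑ k ∈ Finset.range n, if (k : ℝ) ≤ x then 2 * (k : ℝ) + 1 else 0 := by
  induction n with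
  | zero => simp [hx]
  | succ n ih =>
    rw [Finset.sum_range_succ]
    by_cases hnx : (n : ℝ) ≤ x
    · rw [min_eq_right hnx] at ih
      rw [if_pos hnx]
      have hmin : min x (n + 1 : ℕ) ≤ n + 1 := by push_cast; exact min_le_right _ _
      nlinarith [le_min hx (Nat.cast_nonneg (n + 1) : (0 : ℝ) ≤ (n + 1 : ℕ))]
    · push Not at hnx
      rw [if_neg hnx.not_ge, add_zero, min_eq_left (by push_cast; linarith)]
      rwa [min_eq_left hnx.le] at ih

theorem inv_sq_le_two_div_sub (m : ℕ) :
    (((m : ℝ) + 1) ^ 2)⁻¹ ≤ (2 : ℝ) / (2 * m + 1) - 2 / (2 * (m + 1 : ℕ) + 1) := by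
  push_cast
  rw [div_sub_div _ _ (by positivity) (by positivity), inv_eq_one_div,
    div_le_div_iff₀ (by positivity) (by positivity)]
  nlinarith

theorem sum_range_inv_sq_le (k N : ℕ) :
    ∑ t ∈ Finset.range N, ((((t + k : ℕ) : ℝ) + 1) ^ 2)⁻¹ ≤ (2 : ℝ) / (2 * k + 1) := by
  set g : ℕ → ℝ := fun t => 2 / (2 * (t + k : ℕ) + 1)
  calc ∑ t ∈ Finset.range N, ((((t + k : ℕ) : ℝ) + 1) ^ 2)⁻¹
      ≤ ∑ t ∈ Finset.range N, (g t - g (t + 1)) := Finset.sum_le_sum fun t _ => by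
        simpa [g, add_right_comm] using inv_sq_le_two_div_sub (t + k)
    _ = g 0 - g N := Finset.sum_range_sub' g N
    _ ≤ g 0 := sub_le_self _ (by positivity)
    _ = 2 / (2 * k + 1) := by simp [g]

theorem odd_mul_tsum_inv_sq_le (k : ℕ) :
    (2 * k + 1 : ℝ≥0∞) * ∑' t : ℕ, ((((t + k : ℕ) : ℝ≥0∞) + 1) ^ 2)⁻¹ ≤ 2 := by
  have htail : ∑' t : ℕ, ((((t + k : ℕ) : ℝ≥0∞) + 1) ^ 2)⁻¹ ≤
      ENNReal.ofReal (2 / (2 * k + 1)) := by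
    refine ENNReal.tsum_le_of_sum_range_le fun N => ?_
    refine le_of_eq_of_le ?_ (ENNReal.ofReal_le_ofReal (sum_range_inv_sq_le k N))
    rw [ENNReal.ofReal_sum_of_nonneg fun _ _ => by positivity]
    refine Finset.sum_congr rfl fun t _ => ?_
    rw [ENNReal.ofReal_inv_of_pos (by positivity), ENNReal.ofReal_pow (by positivity)]
    norm_cast
  calc (2 * k + 1 : ℝ≥0∞) * ∑' t : ℕ, ((((t + k : ℕ) : ℝ≥0∞) + 1) ^ 2)⁻¹
      ≤ ENNReal.ofReal (2 * k + 1) * ENNReal.ofReal (2 / (2 * k + 1)) := by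
        gcongr
        norm_cast
    _ = 2 := by
        rw [← ENNReal.ofReal_mul (by positivity), mul_div_cancel₀ _ (by positivity)]
        simp

theorem tsum_ite_le_eq_tsum_add (k : ℕ) (g : ℕ → ℝ≥0∞) :
    ∑' i, (if k ≤ i then g i else 0) = ∑' t, g (t + k) := by
  rw [← ENNReal.summable.sum_add_tsum_nat_add' (k := k),
    Finset.sum_eq_zero fun i hi => if_neg (by simpa using hi), zero_add]
  simp

theorem tsum_sum_range_odd_mul_div_sq_le (v : ℕ → ℝ≥0∞) :
    ∑' i : ℕ, (∑ k ∈ Finset.range (i + 1), (2 * k + 1) * v k) / ((i : ℝ≥0∞) + 1) ^ 2 ≤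
      2 * ∑' k, v k := by
  calc ∑' i : ℕ, (∑ k ∈ Finset.range (i + 1), (2 * k + 1) * v k) / ((i : ℝ≥0∞) + 1) ^ 2
      = ∑' i : ℕ, ∑' k : ℕ,
          if k ≤ i then (2 * k + 1) * v k * (((i : ℝ≥0∞) + 1) ^ 2)⁻¹ else 0 := by
        refine tsum_congr fun i => ?_
        rw [div_eq_mul_inv, Finset.sum_mul,
          tsum_eq_sum (s := Finset.range (i + 1)) fun k hk => if_neg (by simpa using hk)]
        exact Finset.sum_congr rfl fun k hk =>
          (if_pos (Nat.lt_succ_iff.mp (Finset.mem_range.mp hk))).symm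
    _ = ∑' k : ℕ, (2 * k + 1) * v k * ∑' t : ℕ, ((((t + k : ℕ) : ℝ≥0∞) + 1) ^ 2)⁻¹ := by
        rw [ENNReal.tsum_comm]
        exact tsum_congr fun k => by rw [tsum_ite_le_eq_tsum_add, ENNReal.tsum_mul_left]
    _ ≤ ∑' k : ℕ, 2 * v k := ENNReal.tsum_le_tsum fun k => by
        rw [mul_right_comm]
        exact mul_le_mul_left (odd_mul_tsum_inv_sq_le k) _
    _ = 2 * ∑' k, v k := ENNReal.tsum_mul_left

theorem tsum_le_lintegral_Ioi_of_antitone {g : ℝ → ℝ≥0∞} (hg : Antitone g) :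
    ∑' k : ℕ, g (k + 1) ≤ ∫⁻ t in Ioi 0, g t := by
  have hdisj : Pairwise (Function.onFun Disjoint fun k : ℕ => Ioc (k : ℝ) (k + 1)) := by
    intro i j hij
    simpa using pairwise_disjoint_Ioc_intCast ℝ (Nat.cast_injective.ne hij : (i : ℤ) ≠ j)
  calc ∑' k : ℕ, g (k + 1) = ∑' k : ℕ, ∫⁻ _ in Ioc (k : ℝ) (k + 1), g (k + 1) := by
        simp [Real.volume_Ioc]
    _ ≤ ∑' k : ℕ, ∫⁻ t in Ioc (k : ℝ) (k + 1), g t :=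
        ENNReal.tsum_le_tsum fun k => setLIntegral_mono' measurableSet_Ioc fun t ht => hg ht.2
    _ = ∫⁻ t in ⋃ k : ℕ, Ioc (k : ℝ) (k + 1), g t :=
        (lintegral_iUnion (fun _ => measurableSet_Ioc) hdisj g).symm
    _ ≤ ∫⁻ t in Ioi 0, g t :=
        lintegral_mono_set (iUnion_subset fun k t ht => (Nat.cast_nonneg k).trans_lt ht.1)

namespace SLE

variable {Ω : Type*} (S : SLE Ω)

theorem comp_mem_of_lipschitzWith {n : ℕ} (X : Fin n → Ω → ℝ) (hX : ∀ i, X i ∈ S.H)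
    {K : ℝ≥0} {φ : (Fin n → ℝ) → ℝ} (hφ : LipschitzWith K φ) :
    (fun ω => φ (fun i => X i ω)) ∈ S.H :=
  S.comp_mem X φ hX (CLLip.of_lipschitzWith hφ)

theorem add_mem {f g : Ω → ℝ} (hf : f ∈ S.H) (hg : g ∈ S.H) :
    (fun ω => f ω + g ω) ∈ S.H := by
  simpa using S.comp_mem_of_lipschitzWith ![f, g] (by simp [Fin.forall_fin_two, hf, hg])
    ((LipschitzWith.eval 0).add (LipschitzWith.eval 1))

theorem const_mul_mem (c : ℝ) {f : Ω → ℝ} (hf : f ∈ S.H) : (fun ω => c * f ω) ∈ S.H := by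
  simpa using S.comp_mem_of_lipschitzWith ![f] (by simp [hf])
    ((lipschitzWith_smul c).comp (LipschitzWith.eval 0))

theorem sum_mem {ι : Type*} (s : Finset ι) {f : ι → Ω → ℝ} (hf : ∀ k ∈ s, f k ∈ S.H) :
    (fun ω => ∑ k ∈ s, f k ω) ∈ S.H := by
  classical
  induction s using Finset.induction with
  | empty => simpa using S.const_mem 0
  | insert a s ha ih =>
    simp only [Finset.sum_insert ha]
    exact S.add_mem (hf a (by simp)) (ih fun k hk => hf k (by simp [hk]))

theorem E_nonneg {f : Ω → ℝ} (hf : f ∈ S.H) (h : ∀ ω, 0 ≤ f ω) : 0 ≤ S.E f := by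
  simpa [S.const_eq] using S.mono (S.const_mem 0) hf h

theorem erealToENNReal_E_add_le {f g : Ω → ℝ} (hf : f ∈ S.H) (hg : g ∈ S.H)
    (hf₀ : ∀ ω, 0 ≤ f ω) (hg₀ : ∀ ω, 0 ≤ g ω) :
    erealToENNReal (S.E fun ω => f ω + g ω) ≤ erealToENNReal (S.E f) + erealToENNReal (S.E g) := by
  have hEf := S.E_nonneg hf hf₀
  have hEg := S.E_nonneg hg hg₀
  rw [← erealToENNReal_add hEf hEg]
  refine erealToENNReal_mono (S.subadd hf hg ?_ ?_)
  · rintro ⟨-, hbot⟩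
    simp [hbot] at hEg
  · rintro ⟨hbot, -⟩
    simp [hbot] at hEf

theorem erealToENNReal_E_sum_le {ι : Type*} (s : Finset ι) {f : ι → Ω → ℝ}
    (hf : ∀ k ∈ s, f k ∈ S.H) (hf₀ : ∀ k ∈ s, ∀ ω, 0 ≤ f k ω) :
    erealToENNReal (S.E fun ω => ∑ k ∈ s, f k ω) ≤ ∑ k ∈ s, erealToENNReal (S.E (f k)) := by
  classical
  induction s using Finset.induction with
  | empty => simp [S.const_eq, erealToENNReal]
  | insert a s ha ih =>
    simp only [Finset.sum_insert ha]
    have hs : ∀ k ∈ s, f k ∈ S.H := fun k hk => hf k (by simp [hk])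
    have hs₀ : ∀ k ∈ s, ∀ ω, 0 ≤ f k ω := fun k hk => hf₀ k (by simp [hk])
    calc _ ≤ erealToENNReal (S.E (f a)) + erealToENNReal (S.E fun ω => ∑ k ∈ s, f k ω) :=
          S.erealToENNReal_E_add_le (hf a (by simp)) (S.sum_mem s hs) (hf₀ a (by simp))
            fun ω => Finset.sum_nonneg fun k hk => hs₀ k hk ω
      _ ≤ _ := by gcongr; exact ih hs hs₀

theorem V_nonneg (A : Set Ω) : 0 ≤ S.V A :=
  le_sInf <| by
    rintro _ ⟨ξ, ⟨hξ, hAξ⟩, rfl⟩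
    exact S.E_nonneg hξ fun ω => (indicator_nonneg (fun _ _ => zero_le_one) ω).trans (hAξ ω)

theorem V_le_one (A : Set Ω) : S.V A ≤ 1 := by
  have h1 : (fun _ : Ω => (1 : ℝ)) ∈ {ξ | ξ ∈ S.H ∧ ∀ ω, A.indicator (fun _ => (1 : ℝ)) ω ≤ ξ ω} :=
    ⟨S.const_mem 1, indicator_le_self' fun _ _ => zero_le_one⟩
  simpa [V, S.const_eq] using sInf_le (mem_image_of_mem S.E h1)

theorem V_mono {A B : Set Ω} (h : A ⊆ B) : S.V A ≤ S.V B :=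
  sInf_le_sInf <| image_mono fun _ ⟨hξ, hBξ⟩ =>
    ⟨hξ, fun ω => (indicator_le_indicator_of_subset h (fun _ => zero_le_one) ω).trans (hBξ ω)⟩

theorem V_univ : S.V (univ : Set Ω) = 1 := by
  refine (S.V_le_one _).antisymm (le_sInf ?_)
  rintro _ ⟨ξ, ⟨hξ, hξ₁⟩, rfl⟩
  simpa [S.const_eq] using S.mono (S.const_mem 1) hξ fun ω => by simpa using hξ₁ ω

theorem exists_E_le_V_add (A : Set Ω) {δ : ℝ} (hδ : 0 < δ) :
    ∃ ξ ∈ S.H, (∀ ω, A.indicator (fun _ => (1 : ℝ)) ω ≤ ξ ω) ∧ S.E ξ ≤ S.V A + δ := by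
  have hfin : S.V A = (S.V A).toReal :=
    (EReal.coe_toReal ((S.V_le_one A).trans_lt (EReal.coe_lt_top 1)).ne
      (ne_bot_of_le_ne_bot (by simp) (S.V_nonneg A))).symm
  have hlt : S.V A < S.V A + δ := by
    rw [hfin]
    exact_mod_cast lt_add_of_pos_right _ hδ
  obtain ⟨_, ⟨ξ, ⟨hξ, hAξ⟩, rfl⟩, hξlt⟩ := sInf_lt_iff.mp hlt
  exact ⟨ξ, hξ, hAξ, hξlt.le⟩

theorem erealToENNReal_E_le_sum_V {ι : Type*} (s : Finset ι) (c : ι → ℝ≥0) (A : ι → Set Ω)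
    {f : Ω → ℝ} (hf : f ∈ S.H)
    (hfA : ∀ ω, f ω ≤ ∑ k ∈ s, c k * (A k).indicator (fun _ => (1 : ℝ)) ω) :
    erealToENNReal (S.E f) ≤ ∑ k ∈ s, c k * erealToENNReal (S.V (A k)) := by
  refine ENNReal.le_of_forall_pos_le_add fun ε hε _ => ?_
  set δ : ℝ≥0 := ε / (∑ k ∈ s, c k + 1)
  have hδ : 0 < (δ : ℝ) := by positivity
  choose ξ hξ hAξ hEξ using fun k => S.exists_E_le_V_add (A k) hδ
  have hξ₀ : ∀ k ω, 0 ≤ ξ k ω := fun k ω =>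
    (indicator_nonneg (fun _ _ => zero_le_one) ω).trans (hAξ k ω)
  have hcξ : ∀ k ∈ s, (fun ω => (c k : ℝ) * ξ k ω) ∈ S.H := fun k _ => S.const_mul_mem _ (hξ k)
  have hEcξ (k : ι) : erealToENNReal (S.E fun ω => (c k : ℝ) * ξ k ω) ≤
      c k * (erealToENNReal (S.V (A k)) + δ) := by
    have hδE : (δ : ℝ≥0∞) = erealToENNReal (δ : ℝ) := by
      rw [erealToENNReal_coe, ENNReal.ofReal_coe_nnreal]
    rw [S.homog (hξ k) _ (c k).coe_nonneg,
      erealToENNReal_coe_mul (c k).coe_nonneg (S.E_nonneg (hξ k) (hξ₀ k)),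
      ENNReal.ofReal_coe_nnreal, hδE,
      ← erealToENNReal_add (S.V_nonneg _) (EReal.coe_nonneg.mpr δ.coe_nonneg)]
    gcongr
    exact erealToENNReal_mono (hEξ k)
  have hδsum : ∑ k ∈ s, (c k : ℝ≥0∞) * δ ≤ ε := by
    rw [← Finset.sum_mul]
    have : (∑ k ∈ s, c k) * δ ≤ ε :=
      calc (∑ k ∈ s, c k) * δ ≤ (∑ k ∈ s, c k + 1) * δ := by gcongr; exact le_self_add
        _ = ε := by simp only [δ]; field_simp
    exact_mod_cast this
  calc erealToENNReal (S.E f)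
      ≤ erealToENNReal (S.E fun ω => ∑ k ∈ s, (c k : ℝ) * ξ k ω) :=
        erealToENNReal_mono <| S.mono hf (S.sum_mem s hcξ) fun ω =>
          (hfA ω).trans (Finset.sum_le_sum fun k _ => by gcongr; exact hAξ k ω)
    _ ≤ ∑ k ∈ s, erealToENNReal (S.E fun ω => (c k : ℝ) * ξ k ω) :=
        S.erealToENNReal_E_sum_le s hcξ fun k _ ω => mul_nonneg (c k).coe_nonneg (hξ₀ k ω)
    _ ≤ ∑ k ∈ s, c k * (erealToENNReal (S.V (A k)) + δ) := Finset.sum_le_sum fun k _ => hEcξ k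
    _ = ∑ k ∈ s, c k * erealToENNReal (S.V (A k)) + ∑ k ∈ s, (c k : ℝ≥0∞) * δ := by
        simp only [mul_add, Finset.sum_add_distrib]
    _ ≤ _ := by gcongr

theorem erealToENNReal_E_sq_min_le {X : Ω → ℝ} (hX : X ∈ S.H) (n : ℕ) :
    erealToENNReal (S.E fun ω => min |X ω| n ^ 2) ≤
      ∑ k ∈ Finset.range n, (2 * k + 1) * erealToENNReal (S.V {ω | (k : ℝ) ≤ |X ω|}) := by
  have hmem : (fun ω => min |X ω| n ^ 2) ∈ S.H := by
    simpa using S.comp_mem_of_lipschitzWith ![X] (by simp [hX])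
      ((lipschitzWith_sq_min_abs n).comp (LipschitzWith.eval 0))
  have h := S.erealToENNReal_E_le_sum_V (Finset.range n) (fun k => 2 * k + 1)
    (fun k => {ω | (k : ℝ) ≤ |X ω|}) hmem fun ω => ?_
  · simpa using h
  · simpa [indicator_apply, mul_ite] using sq_min_le_sum_range_odd (abs_nonneg (X ω)) n

theorem antitone_V_setOf_le (Y : Ω → ℝ) : Antitone fun t => S.V {ω | t ≤ Y ω} :=
  fun _ _ hst => S.V_mono fun _ h => hst.trans h

theorem choquet_of_nonneg {Y : Ω → ℝ} (hY : ∀ ω, 0 ≤ Y ω) :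
    S.choquet Y = ((∫⁻ t in Ioi 0, erealToENNReal (S.V {ω | t ≤ Y ω}) : ℝ≥0∞) : EReal) := by
  have hneg : ∫⁻ t in Iio (0 : ℝ), erealToENNReal (1 - S.V {ω | t ≤ Y ω}) = 0 := by
    refine (setLIntegral_congr_fun measurableSet_Iio fun t ht => ?_).trans lintegral_zero
    have huniv : {ω | t ≤ Y ω} = univ := eq_univ_of_forall fun ω => (le_of_lt ht).trans (hY ω)
    rw [huniv, S.V_univ, ← EReal.coe_one, ← EReal.coe_sub, sub_self, erealToENNReal_coe]
    simp
  rw [choquet, hneg, EReal.coe_ennreal_zero, sub_zero]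

theorem tsum_E_sq_min_div_sq_le {X : Ω → ℝ} (hX : X ∈ S.H) :
    ∑' i : ℕ, erealToENNReal (S.E fun ω => min |X ω| ((i : ℝ) + 1) ^ 2) / ((i : ℝ≥0∞) + 1) ^ 2 ≤
      2 + 2 * ∫⁻ t in Ioi 0, erealToENNReal (S.V {ω | t ≤ |X ω|}) := by
  set v : ℕ → ℝ≥0∞ := fun k => erealToENNReal (S.V {ω | (k : ℝ) ≤ |X ω|})
  calc _ ≤ ∑' i : ℕ, (∑ k ∈ Finset.range (i + 1), (2 * k + 1) * v k) / ((i : ℝ≥0∞) + 1) ^ 2 :=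
        ENNReal.tsum_le_tsum fun i => ENNReal.div_le_div_right
          (by simpa using S.erealToENNReal_E_sq_min_le hX (i + 1)) _
    _ ≤ 2 * ∑' k, v k := tsum_sum_range_odd_mul_div_sq_le v
    _ = 2 * (v 0 + ∑' k : ℕ, v (k + 1)) := by rw [tsum_eq_zero_add' ENNReal.summable]
    _ ≤ 2 * (1 + ∫⁻ t in Ioi 0, erealToENNReal (S.V {ω | t ≤ |X ω|})) := by
        gcongr
        · simpa [erealToENNReal_one] using erealToENNReal_mono (S.V_le_one _)
        · simpa [v] using tsum_le_lintegral_Ioi_of_antitone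
            (erealToENNReal_mono.comp_antitone (S.antitone_V_setOf_le fun ω => |X ω|))
    _ = 2 + 2 * ∫⁻ t in Ioi 0, erealToENNReal (S.V {ω | t ≤ |X ω|}) := by ring

end SLE

/-- **Truncated second-moment series bound (Lemma 3(a)).**
If `X ∈ ℋ` and `C_V[|X|] < ∞`, then
`Σ_{j=1}^∞ E[(|X| ∧ j)²]/j² ≤ 2 + 3 C_V[|X|] < ∞` (the series being indexed below by
`j = i + 1`, `i ∈ ℕ`, so that `j` ranges over `1, 2, 3, …`). -/
theorem truncated_second_moment_series_bound {Ω : Type*} (S : SLE Ω) (X : Ω → ℝ)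
    (hX : X ∈ S.H)
    (hChoquet : S.choquet (fun ω => |X ω|) < ⊤) :
    (∑' i : ℕ, erealToENNReal (S.E (fun ω => (min (|X ω|) ((i : ℝ) + 1)) ^ 2))
        / ((i : ℝ≥0∞) + 1) ^ 2)
      ≤ 2 + 3 * erealToENNReal (S.choquet (fun ω => |X ω|)) ∧
    (∑' i : ℕ, erealToENNReal (S.E (fun ω => (min (|X ω|) ((i : ℝ) + 1)) ^ 2))
        / ((i : ℝ≥0∞) + 1) ^ 2) < ⊤ := by
  have hC := S.choquet_of_nonneg fun ω => abs_nonneg (X ω)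
  set I := ∫⁻ t in Ioi 0, erealToENNReal (S.V {ω | t ≤ |X ω|})
  have hI : I < ⊤ := by
    rw [hC, ← EReal.coe_ennreal_top] at hChoquet
    exact EReal.coe_ennreal_lt_coe_ennreal_iff.mp hChoquet
  have hbound := S.tsum_E_sq_min_div_sq_le hX
  rw [hC, erealToENNReal_coe_ennreal]
  refine ⟨hbound.trans (by gcongr; norm_num), hbound.trans_lt ?_⟩
  exact ENNReal.add_lt_top.mpr ⟨by norm_num, ENNReal.mul_lt_top (by norm_num) hI⟩
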